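/- Let α ∈ (0,1) and ε > 0, and set β = 1 − 2Q(√(−2 log(1−α))). For each k, let x be a k-sparse random vector in ℝ^n (n ≥ k) whose k nonzero entries are i.i.d. standard normal N(0,1). Then P( W(x, α‖x‖₁) < k(β + ε) ) → 1 as k → ∞. -/

import Mathlib

/-!
Put `t = √(-2 log (1 - α))`, so that `exp (-t² / 2) = 1 - α`, and `f a = min |a| t - α |a|`.
If `S ⊆ supp x` has `‖x_S‖₁ ≤ α ‖x‖₁`, bounding `min |xᵢ| t` by `|xᵢ|` on `S` and by `t` off `S`
gives `∑ᵢ f xᵢ ≤ (k - |S|) t`; so `W (x, α ‖x‖₁) ≥ k (β + ε)` forces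
`∑ᵢ f xᵢ ≤ k ((1 - β) t - ε t)`. For a standard normal `Z`,
`E f Z = 2 t Q(t) + √(2/π) (1 - α - exp (-t² / 2)) = (1 - β) t`, so this event is a deviation
of order `k` of a sum of `k` i.i.d. square-integrable variables below its mean, and Chebyshev's
inequality bounds its probability by `O(1 / k)`.
-/

open Finset MeasureTheory ProbabilityTheory Filter

/-- The standard Gaussian upper tail function `Q`. -/
noncomputable def gaussQ (x : ℝ) : ℝ :=
  (Real.sqrt (2 * Real.pi))⁻¹ * ∫ y in Set.Ioi x, Real.exp (-(y ^ 2) / 2)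

/-- The support of a vector `x : Fin n → ℝ` as a `Finset`. -/
noncomputable def spt {n : ℕ} (x : Fin n → ℝ) : Finset (Fin n) :=
  Finset.univ.filter (fun i => x i ≠ 0)

/-- `W x lam` is the size of the largest subset `S` of the support of `x`
with `‖x_S‖₁ ≤ lam`. -/
noncomputable def W {n : ℕ} (x : Fin n → ℝ) (lam : ℝ) : ℕ :=
  ((spt x).powerset.filter (fun S => ∑ i ∈ S, |x i| ≤ lam)).sup Finset.card

open Real Set Topology
open scoped NNReal

lemma hasDerivAt_neg_exp_neg_sq_div_two (r : ℝ) :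
    HasDerivAt (fun r : ℝ => -exp (-(r ^ 2) / 2)) (r * exp (-(r ^ 2) / 2)) r := by
  have h : HasDerivAt (fun r : ℝ => -(r ^ 2) / 2) (-r) r :=
    ((hasDerivAt_pow 2 r).neg.div_const 2).congr_deriv (by simp; ring)
  exact h.exp.neg.congr_deriv (by ring)

lemma integrable_exp_neg_sq_div_two : Integrable fun r : ℝ => exp (-(r ^ 2) / 2) := by
  simpa [neg_div, div_eq_inv_mul] using integrable_exp_neg_mul_sq (b := 1 / 2) (by norm_num)

lemma integrable_mul_exp_neg_sq_div_two : Integrable fun r : ℝ => r * exp (-(r ^ 2) / 2) := by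
  simpa [neg_div, div_eq_inv_mul] using integrable_mul_exp_neg_mul_sq (b := 1 / 2) (by norm_num)

lemma integral_Ioi_mul_exp_neg_sq_div_two (a : ℝ) :
    ∫ r in Ioi a, r * exp (-(r ^ 2) / 2) = exp (-(a ^ 2) / 2) := by
  have hlim : Tendsto (fun r : ℝ => -exp (-(r ^ 2) / 2)) atTop (𝓝 0) := by
    simpa using (tendsto_exp_atBot.comp <| (tendsto_neg_atTop_atBot.comp <|
      tendsto_pow_atTop two_ne_zero).atBot_div_const two_pos).neg
  rw [integral_Ioi_of_hasDerivAt_of_tendsto' (fun r _ => hasDerivAt_neg_exp_neg_sq_div_two r)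
    integrable_mul_exp_neg_sq_div_two.integrableOn hlim]
  ring

lemma integral_Ioc_zero_mul_exp_neg_sq_div_two {t : ℝ} (ht : 0 ≤ t) :
    ∫ r in Ioc 0 t, r * exp (-(r ^ 2) / 2) = 1 - exp (-(t ^ 2) / 2) := by
  rw [← intervalIntegral.integral_of_le ht, intervalIntegral.integral_eq_sub_of_hasDerivAt
    (fun r _ => hasDerivAt_neg_exp_neg_sq_div_two r)
    integrable_mul_exp_neg_sq_div_two.intervalIntegrable]
  simp
  ring

lemma integral_gaussianReal_comp_abs (g : ℝ → ℝ) :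
    ∫ a, g |a| ∂gaussianReal 0 1 = 2 / √(2 * π) * ∫ r in Ioi 0, exp (-(r ^ 2) / 2) * g r := by
  have hpdf (a : ℝ) : gaussianPDFReal 0 1 a • g |a|
      = (√(2 * π))⁻¹ * (fun r => exp (-(r ^ 2) / 2) * g r) |a| := by
    simp [gaussianPDFReal, sq_abs, mul_assoc]
  rw [integral_gaussianReal_eq_integral_smul one_ne_zero, integral_congr_ae (ae_of_all _ hpdf),
    integral_const_mul, integral_comp_abs (f := fun r => exp (-(r ^ 2) / 2) * g r)]
  ring

lemma integral_abs_gaussianReal : ∫ a, |a| ∂gaussianReal 0 1 = 2 / √(2 * π) := by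
  simp_rw [integral_gaussianReal_comp_abs (fun r => r), mul_comm (exp _),
    integral_Ioi_mul_exp_neg_sq_div_two]
  simp

lemma integral_min_abs_gaussianReal {t : ℝ} (ht : 0 ≤ t) :
    ∫ a, min |a| t ∂gaussianReal 0 1
      = 2 / √(2 * π) * (1 - exp (-(t ^ 2) / 2)) + 2 * t * gaussQ t := by
  have hIoc : EqOn (fun r => exp (-(r ^ 2) / 2) * min r t) (fun r => r * exp (-(r ^ 2) / 2))
      (Ioc 0 t) := fun r hr => by simp [min_eq_left hr.2, mul_comm]
  have hIoi : EqOn (fun r => exp (-(r ^ 2) / 2) * min r t) (fun r => t * exp (-(r ^ 2) / 2))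
      (Ioi t) := fun r hr => by simp [min_eq_right (mem_Ioi.1 hr).le, mul_comm]
  rw [integral_gaussianReal_comp_abs (fun r => min r t), ← Ioc_union_Ioi_eq_Ioi ht,
    setIntegral_union (Ioc_disjoint_Ioi le_rfl) measurableSet_Ioi
      (integrable_mul_exp_neg_sq_div_two.integrableOn.congr_fun hIoc.symm measurableSet_Ioc)
      ((integrable_exp_neg_sq_div_two.const_mul t).integrableOn.congr_fun hIoi.symm
        measurableSet_Ioi),
    setIntegral_congr_fun measurableSet_Ioc hIoc, setIntegral_congr_fun measurableSet_Ioi hIoi,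
    integral_const_mul, integral_Ioc_zero_mul_exp_neg_sq_div_two ht, gaussQ]
  field_simp

lemma memLp_abs_gaussianReal (p : ℝ≥0) : MemLp (fun a => |a|) p (gaussianReal 0 1) :=
  (memLp_id_gaussianReal p).abs

lemma memLp_min_abs_gaussianReal (t : ℝ) (p : ℝ≥0) :
    MemLp (fun a => min |a| t) p (gaussianReal 0 1) :=
  (memLp_abs_gaussianReal p).inf (memLp_const t)

lemma exp_neg_sq_sqrt_neg_two_mul_log_div_two {α : ℝ} (hα0 : 0 ≤ α) (hα1 : α < 1) :
    exp (-(√(-2 * log (1 - α)) ^ 2) / 2) = 1 - α := by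
  have hlog : log (1 - α) ≤ 0 := log_nonpos (by linarith) (by linarith)
  rw [sq_sqrt (by linarith), neg_mul, neg_neg, mul_div_cancel_left₀ _ two_ne_zero,
    exp_log (by linarith)]

lemma integral_min_abs_sub_mul_abs_gaussianReal {α t : ℝ} (ht : 0 ≤ t)
    (hαt : exp (-(t ^ 2) / 2) = 1 - α) :
    ∫ a, (min |a| t - α * |a|) ∂gaussianReal 0 1 = 2 * t * gaussQ t := by
  rw [integral_sub (memLp_one_iff_integrable.1 (memLp_min_abs_gaussianReal t 1))
    ((memLp_one_iff_integrable.1 (memLp_abs_gaussianReal 1)).const_mul α), integral_const_mul,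
    integral_min_abs_gaussianReal ht, integral_abs_gaussianReal, hαt]
  ring

lemma spt_subset_of_forall_notMem {n : ℕ} {y : Fin n → ℝ} {K : Finset (Fin n)}
    (hK : ∀ i ∉ K, y i = 0) : spt y ⊆ K := fun i hi => by
  by_contra hiK
  exact (mem_filter.1 hi).2 (hK i hiK)

lemma exists_subset_spt_card_eq_W {n : ℕ} (y : Fin n → ℝ) {lam : ℝ} (hlam : 0 ≤ lam) :
    ∃ S ⊆ spt y, ∑ i ∈ S, |y i| ≤ lam ∧ S.card = W y lam := by
  obtain ⟨S, hS, hSW⟩ := exists_mem_eq_sup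
    ((spt y).powerset.filter fun S => ∑ i ∈ S, |y i| ≤ lam) ⟨∅, by simp [hlam]⟩ Finset.card
  rw [mem_filter, Finset.mem_powerset] at hS
  exact ⟨S, hS.1, hS.2, hSW.symm⟩

lemma sum_min_abs_le_add_mul {n : ℕ} {y : Fin n → ℝ} {K : Finset (Fin n)} (hK : spt y ⊆ K)
    {lam : ℝ} (hlam : 0 ≤ lam) (t : ℝ) :
    ∑ i ∈ K, min |y i| t ≤ lam + (K.card - W y lam) * t := by
  obtain ⟨S, hSy, hSlam, hSW⟩ := exists_subset_spt_card_eq_W y hlam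
  have hSK : S ⊆ K := hSy.trans hK
  have hS : ∑ i ∈ S, min |y i| t ≤ lam :=
    (sum_le_sum fun i _ => min_le_left _ _).trans hSlam
  have hKS : ∑ i ∈ K \ S, min |y i| t ≤ (K.card - W y lam) * t := by
    calc ∑ i ∈ K \ S, min |y i| t ≤ ∑ i ∈ K \ S, t := sum_le_sum fun i _ => min_le_right _ _
      _ = (K.card - W y lam) * t := by
        rw [sum_const, nsmul_eq_mul, card_sdiff_of_subset hSK,
          Nat.cast_sub (Finset.card_le_card hSK), hSW]
  rw [← sum_sdiff hSK]
  linarith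

lemma sum_min_abs_sub_mul_abs_le {n : ℕ} {y : Fin n → ℝ} {K : Finset (Fin n)}
    (hK : ∀ i ∉ K, y i = 0) {α : ℝ} (hα : 0 ≤ α) (t : ℝ) :
    ∑ i ∈ K, (min |y i| t - α * |y i|) ≤ (K.card - W y (α * ∑ i, |y i|)) * t := by
  have hsum : ∑ i, |y i| = ∑ i ∈ K, |y i| :=
    (sum_subset (subset_univ K) fun i _ hi => by rw [hK i hi, abs_zero]).symm
  have := sum_min_abs_le_add_mul (spt_subset_of_forall_notMem hK)
    (lam := α * ∑ i, |y i|) (by positivity) t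
  rw [sum_sub_distrib, ← mul_sum, ← hsum]
  linarith

lemma measure_sum_comp_le_card_mul_sub_le {Ω ι β : Type*} [MeasurableSpace Ω] [MeasurableSpace β]
    {μ : Measure Ω} [IsProbabilityMeasure μ] {ν : Measure β} {K : Finset ι} {X : ι → Ω → β}
    (hX : ∀ i ∈ K, MeasurePreserving (X i) μ ν)
    (hindep : Set.Pairwise K fun i j => IndepFun (X i) (X j) μ)
    {f : β → ℝ} (hf : Measurable f) (hfL2 : MemLp f 2 ν) (hK : K.Nonempty) {c : ℝ} (hc : 0 < c) :
    μ {ω | ∑ i ∈ K, f (X i ω) ≤ K.card * (ν[f] - c)}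
      ≤ ENNReal.ofReal (Var[f; ν] / (K.card * c ^ 2)) := by
  set S : Ω → ℝ := ∑ i ∈ K, fun ω => f (X i ω) with hS
  have hL2 : ∀ i ∈ K, MemLp (fun ω => f (X i ω)) 2 μ := fun i hi =>
    hfL2.comp_measurePreserving (hX i hi)
  have hmean_i : ∀ i ∈ K, ∫ ω, f (X i ω) ∂μ = ν[f] := fun i hi => by
    rw [← (hX i hi).map_eq, integral_map (hX i hi).aemeasurable hf.aestronglyMeasurable]
  have hmean : μ[S] = (K.card : ℝ) * ν[f] := by
    simp only [hS, Finset.sum_apply]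
    rw [integral_finsetSum _ fun i hi => (hL2 i hi).integrable one_le_two,
      sum_congr rfl hmean_i, sum_const, nsmul_eq_mul]
  have hvar : Var[S; μ] = (K.card : ℝ) * Var[f; ν] := by
    rw [hS, IndepFun.variance_sum hL2 fun i hi j hj hij => (hindep hi hj hij).comp hf hf,
      sum_congr rfl fun i hi => (hX i hi).variance_fun_comp hf.aemeasurable, sum_const,
      nsmul_eq_mul]
  have hKpos : (0 : ℝ) < K.card := by exact_mod_cast hK.card_pos
  calc μ {ω | ∑ i ∈ K, f (X i ω) ≤ K.card * (ν[f] - c)}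
      ≤ μ {ω | (K.card : ℝ) * c ≤ |S ω - μ[S]|} := measure_mono fun ω hω => by
        have hSω : S ω = ∑ i ∈ K, f (X i ω) := Finset.sum_apply ω K _
        rw [Set.mem_ofPred, hmean, hSω, abs_sub_comm]
        exact le_abs.2 (Or.inl (by linarith [Set.mem_ofPred.1 hω]))
    _ ≤ ENNReal.ofReal (Var[S; μ] / ((K.card : ℝ) * c) ^ 2) :=
        meas_ge_le_variance_div_sq (memLp_finsetSum' K hL2) (by positivity)
    _ = ENNReal.ofReal (Var[f; ν] / (K.card * c ^ 2)) := by
        rw [hvar]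
        congr 1
        field_simp

lemma tendsto_measure_nhds_one_of_compl {ι : Type*} {l : Filter ι} {Ω : ι → Type*}
    [∀ k, MeasurableSpace (Ω k)] {μ : ∀ k, Measure (Ω k)} [∀ k, IsProbabilityMeasure (μ k)]
    {E : ∀ k, Set (Ω k)} (h : Tendsto (fun k => μ k (E k)ᶜ) l (𝓝 0)) :
    Tendsto (fun k => μ k (E k)) l (𝓝 1) := by
  have hlower (k : ι) : 1 - μ k (E k)ᶜ ≤ μ k (E k) :=
    tsub_le_iff_right.2 (measure_univ (μ := μ k) ▸ measure_univ_le_add_compl (E k))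
  refine tendsto_of_tendsto_of_tendsto_of_le_of_le ?_ tendsto_const_nhds hlower
    fun k => prob_le_one
  simpa using ENNReal.Tendsto.sub tendsto_const_nhds h (Or.inl ENNReal.one_ne_top)

theorem stmt7_general (α ε : ℝ) (hα : α ∈ Set.Ioo (0 : ℝ) 1) (hε : 0 < ε)
    (n : ℕ → ℕ)
    (Ω : ℕ → Type*) [∀ k, MeasurableSpace (Ω k)]
    (μ : ∀ k, Measure (Ω k)) [∀ k, IsProbabilityMeasure (μ k)]
    (x : ∀ k, Ω k → Fin (n k) → ℝ)
    (K : ∀ k, Finset (Fin (n k))) (hKcard : ∀ k, (K k).card = k)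
    (hzero : ∀ k, ∀ ω, ∀ i ∉ K k, x k ω i = 0)
    (hmeas : ∀ k i, Measurable (fun ω => x k ω i))
    (hindep : ∀ k, iIndepFun
      (fun (i : {i // i ∈ K k}) => fun ω => x k ω i.1) (μ k))
    (hdist : ∀ k, ∀ i ∈ K k, Measure.map (fun ω => x k ω i) (μ k) = gaussianReal 0 1) :
    Tendsto
      (fun k => μ k {ω | (W (x k ω) (α * ∑ i, |x k ω i|) : ℝ) <
          k * ((1 - 2 * gaussQ (Real.sqrt (-2 * Real.log (1 - α)))) + ε)})
      atTop (nhds 1) := by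
  obtain ⟨hα0, hα1⟩ := hα
  set t := √(-2 * log (1 - α))
  have ht : 0 < t := sqrt_pos.2 (by linarith [log_neg (by linarith : 0 < 1 - α) (by linarith)])
  set f : ℝ → ℝ := fun a => min |a| t - α * |a|
  have hf : Measurable f := by fun_prop
  have hfL2 : MemLp f 2 (gaussianReal 0 1) :=
    (memLp_min_abs_gaussianReal t 2).sub ((memLp_abs_gaussianReal 2).const_mul α)
  have hmean := integral_min_abs_sub_mul_abs_gaussianReal ht.le
    (exp_neg_sq_sqrt_neg_two_mul_log_div_two hα0.le hα1)
  apply tendsto_measure_nhds_one_of_compl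
  refine tendsto_of_tendsto_of_tendsto_of_le_of_le' tendsto_const_nhds
    (h := fun k : ℕ => ENNReal.ofReal (Var[f; gaussianReal 0 1] / (k * (ε * t) ^ 2))) ?_
    (.of_forall fun k => zero_le) ?_
  · simpa [← div_div] using ENNReal.tendsto_ofReal
      ((tendsto_const_div_atTop_nhds_zero_nat _).div_const ((ε * t) ^ 2))
  filter_upwards [eventually_ge_atTop 1] with k hk
  calc _ ≤ μ k {ω | ∑ i ∈ K k, f (x k ω i) ≤ k * (∫ a, f a ∂gaussianReal 0 1 - ε * t)} :=
        measure_mono fun ω hω => by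
          have hsum : ∑ i ∈ K k, f (x k ω i) ≤ (k - W (x k ω) (α * ∑ i, |x k ω i|)) * t := by
            simpa only [hKcard] using sum_min_abs_sub_mul_abs_le (hzero k ω) hα0.le t
          rw [Set.mem_compl_iff, Set.mem_ofPred, not_lt] at hω
          rw [Set.mem_ofPred, hmean]
          linarith [mul_le_mul_of_nonneg_right hω ht.le]
    _ ≤ _ := by
        simpa only [hKcard] using measure_sum_comp_le_card_mul_sub_le
          (fun i hi => ⟨hmeas k i, hdist k i hi⟩)
          (fun i hi j hj hij => (hindep k).indepFun (i := ⟨i, hi⟩) (j := ⟨j, hj⟩)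
            (fun h => hij (congrArg Subtype.val h))) hf hfL2
          (card_pos.1 ((hKcard k).symm ▸ hk)) (mul_pos hε ht)

/-- For random `k`-sparse Gaussian vectors, with `β = 1 − 2Q(√(−2 log(1−α)))`, the probability
that `W(x, α‖x‖₁) < k(β + ε)` tends to `1` as `k → ∞`. -/
theorem stmt7 (α ε : ℝ) (hα : α ∈ Set.Ioo (0 : ℝ) 1) (hε : 0 < ε)
    (n : ℕ → ℕ) (hn : ∀ k, k ≤ n k)
    (Ω : ℕ → Type*) [∀ k, MeasurableSpace (Ω k)]
    (μ : ∀ k, Measure (Ω k)) [∀ k, IsProbabilityMeasure (μ k)]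
    (x : ∀ k, Ω k → Fin (n k) → ℝ)
    (K : ∀ k, Finset (Fin (n k))) (hKcard : ∀ k, (K k).card = k)
    (hzero : ∀ k, ∀ ω, ∀ i ∉ K k, x k ω i = 0)
    (hnonzero : ∀ k, ∀ ω, ∀ i ∈ K k, x k ω i ≠ 0)
    (hmeas : ∀ k i, Measurable (fun ω => x k ω i))
    (hindep : ∀ k, iIndepFun
      (fun (i : {i // i ∈ K k}) => fun ω => x k ω i.1) (μ k))
    (hdist : ∀ k, ∀ i ∈ K k, Measure.map (fun ω => x k ω i) (μ k) = gaussianReal 0 1) :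
    Tendsto
      (fun k => μ k {ω | (W (x k ω) (α * ∑ i, |x k ω i|) : ℝ) <
          k * ((1 - 2 * gaussQ (Real.sqrt (-2 * Real.log (1 - α)))) + ε)})
      atTop (nhds 1) :=
  stmt7_general α ε hα hε n Ω μ x K hKcard hzero hmeas hindep hdist
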